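/- Alpha-equivalence alpha is an equivalence relation (reflexive, symmetric, transitive) on good quasiterms, and alphaAbs is an equivalence relation on good quasiabstractions. -/

import Mathlib

open scoped Classical

universe u

section Binding

variable (var varsort index bindex opsym : Type u)

/-! ### Inputs -/

/-- An `(α,β)`-input: a partial function from `α` to `β`. -/
abbrev Input (α β : Type u) : Type u := α → Option β

/-- The domain of an input. -/
def idom {α β : Type u} (inp : Input α β) : Set α := {a | inp a ≠ none}

/-- The componentwise lifting of a predicate to inputs. -/
def liftP {α β : Type u} (P : β → Prop) (inp : Input α β) : Prop :=
  ∀ a b, inp a = some b → P b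

/-- The componentwise lifting of a function to inputs. -/
def liftF {α β γ : Type u} (f : β → γ) (inp : Input α β) : Input α γ :=
  fun a => (inp a).map f

/-- An input is small if its domain has cardinality smaller than that of `var`. -/
def smallDom {α β : Type u} (inp : Input α β) : Prop :=
  Cardinal.mk (idom inp) < Cardinal.mk var

/-! ### Quasiterms -/

mutual
/-- Quasiterms: raw terms before quotienting by alpha-equivalence. -/
inductive QTerm : Type u where
  | qVar : varsort → var → QTerm
  | qOp : opsym → (index → Option QTerm) → (bindex → Option QAbs) → QTerm
/-- Quasiabstractions. -/
inductive QAbs : Type u where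
  | qAbs : varsort → var → QTerm → QAbs
end

/-- Transposition of two variables. -/
noncomputable def swapVar (z1 z2 x : var) : var :=
  if x = z1 then z2 else if x = z2 then z1 else x

/-- Sort-aware transposition of variables (acts only on variables of varsort `zs`). -/
noncomputable def swapVarS (zs xs : varsort) (z1 z2 x : var) : var :=
  if xs = zs then swapVar var z1 z2 x else x

variable {var varsort index bindex opsym}

/-- Swapping of the variables `z1`, `z2` at varsort `zs` in a quasiterm
(transposing them everywhere, including binding positions). -/
noncomputable def qSwap (z1 z2 : var) (zs : varsort) :
    QTerm var varsort index bindex opsym → QTerm var varsort index bindex opsym :=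
  QTerm.rec (motive_1 := fun _ => QTerm var varsort index bindex opsym)
    (motive_2 := fun _ => QAbs var varsort index bindex opsym)
    (motive_3 := fun _ => Option (QTerm var varsort index bindex opsym))
    (motive_4 := fun _ => Option (QAbs var varsort index bindex opsym))
    (fun xs x => .qVar xs (swapVarS var varsort zs xs z1 z2 x))
    (fun d _ _ rinp rbinp => .qOp d rinp rbinp)
    (fun xs x _ rX => .qAbs xs (swapVarS var varsort zs xs z1 z2 x) rX)
    none (fun _ r => some r) none (fun _ r => some r)

/-- Swapping of variables in a quasiabstraction. -/
noncomputable def qSwapAbs (z1 z2 : var) (zs : varsort) :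
    QAbs var varsort index bindex opsym → QAbs var varsort index bindex opsym
  | .qAbs xs x X => .qAbs xs (swapVarS var varsort zs xs z1 z2 x) (qSwap z1 z2 zs X)

/-! ### Freshness and goodness -/

mutual
/-- `QFresh ys y X`: the variable `y` of varsort `ys` has no free occurrence in `X`. -/
inductive QFresh : varsort → var → QTerm var varsort index bindex opsym → Prop where
  | qVar : ∀ {ys y xs x}, (ys, y) ≠ (xs, x) → QFresh ys y (.qVar xs x)
  | qOp : ∀ {ys y d inp binp}, (∀ i X, inp i = some X → QFresh ys y X) →
      (∀ j A, binp j = some A → QFreshAbs ys y A) → QFresh ys y (.qOp d inp binp)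
/-- Freshness for quasiabstractions. -/
inductive QFreshAbs : varsort → var → QAbs var varsort index bindex opsym → Prop where
  | qAbs_bound : ∀ {xs x X}, QFreshAbs xs x (.qAbs xs x X)
  | qAbs_body : ∀ {ys y xs x X}, QFresh ys y X → QFreshAbs ys y (.qAbs xs x X)
end

mutual
/-- Good quasiterms: all constructors branch less than `|var|`. -/
inductive QGood : QTerm var varsort index bindex opsym → Prop where
  | qVar : ∀ {xs x}, QGood (.qVar xs x)
  | qOp : ∀ {d inp binp}, (∀ i X, inp i = some X → QGood X) →
      (∀ j A, binp j = some A → QGoodAbs A) →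
      smallDom var inp → smallDom var binp → QGood (.qOp d inp binp)
/-- Good quasiabstractions. -/
inductive QGoodAbs : QAbs var varsort index bindex opsym → Prop where
  | qAbs : ∀ {xs x X}, QGood X → QGoodAbs (.qAbs xs x X)
end

/-! ### Alpha-equivalence -/

mutual
/-- Alpha-equivalence of quasiterms. -/
inductive Alpha : QTerm var varsort index bindex opsym →
    QTerm var varsort index bindex opsym → Prop where
  | qVar : ∀ {xs x}, Alpha (.qVar xs x) (.qVar xs x)
  | qOp : ∀ {d inp binp inp' binp'},
      (∀ i, inp i = none ↔ inp' i = none) →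
      (∀ i X X', inp i = some X → inp' i = some X' → Alpha X X') →
      (∀ j, binp j = none ↔ binp' j = none) →
      (∀ j A A', binp j = some A → binp' j = some A' → AlphaAbs A A') →
      Alpha (.qOp d inp binp) (.qOp d inp' binp')
/-- Alpha-equivalence of quasiabstractions (the exists-fresh formulation). -/
inductive AlphaAbs : QAbs var varsort index bindex opsym →
    QAbs var varsort index bindex opsym → Prop where
  | qAbs : ∀ {xs x x' X X' y}, y ∉ ({x, x'} : Set var) →
      QFresh xs y X → QFresh xs y X' →
      Alpha (qSwap y x xs X) (qSwap y x' xs X') →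
      AlphaAbs (.qAbs xs x X) (.qAbs xs x' X')
end

/-! ### Terms and abstractions as quotients -/

variable (var varsort index bindex opsym)

/-- Terms: quasiterms modulo alpha-equivalence. -/
def Term : Type u := Quot (@Alpha var varsort index bindex opsym)

/-- Abstractions: quasiabstractions modulo alpha-equivalence. -/
def Abstr : Type u := Quot (@AlphaAbs var varsort index bindex opsym)

variable {var varsort index bindex opsym}

/-- The projection from quasiterms to terms. -/
def tmk : QTerm var varsort index bindex opsym → Term var varsort index bindex opsym :=
  Quot.mk _

/-- The projection from quasiabstractions to abstractions. -/
def amk : QAbs var varsort index bindex opsym → Abstr var varsort index bindex opsym :=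
  Quot.mk _

/-- A representative of a term. -/
noncomputable def trep (X : Term var varsort index bindex opsym) :
    QTerm var varsort index bindex opsym := Quot.out X

/-- A representative of an abstraction. -/
noncomputable def arep (A : Abstr var varsort index bindex opsym) :
    QAbs var varsort index bindex opsym := Quot.out A

/-- Good terms. -/
def good (X : Term var varsort index bindex opsym) : Prop := QGood (trep X)

/-- Good abstractions. -/
def goodAbs (A : Abstr var varsort index bindex opsym) : Prop := QGoodAbs (arep A)

/-- The variable-injection constructor on terms. -/
def Var (xs : varsort) (x : var) : Term var varsort index bindex opsym :=
  tmk (.qVar xs x)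

/-- The operation constructor on terms. -/
noncomputable def Op (d : opsym) (inp : Input index (Term var varsort index bindex opsym))
    (binp : Input bindex (Abstr var varsort index bindex opsym)) :
    Term var varsort index bindex opsym :=
  tmk (.qOp d (liftF trep inp) (liftF arep binp))

/-- The abstraction constructor. -/
noncomputable def Abs (xs : varsort) (x : var) (X : Term var varsort index bindex opsym) :
    Abstr var varsort index bindex opsym :=
  amk (.qAbs xs x (trep X))

/-- Freshness on terms. -/
def fresh (ys : varsort) (y : var) (X : Term var varsort index bindex opsym) : Prop :=
  QFresh ys y (trep X)

/-- Freshness on abstractions. -/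
def freshAbs (ys : varsort) (y : var) (A : Abstr var varsort index bindex opsym) : Prop :=
  QFreshAbs ys y (arep A)

/-- Swapping on terms. -/
noncomputable def tswap (X : Term var varsort index bindex opsym)
    (z1 z2 : var) (zs : varsort) : Term var varsort index bindex opsym :=
  tmk (qSwap z1 z2 zs (trep X))

/-! ### Substitution -/

mutual
/-- The graph of capture-avoiding substitution on quasiterms:
`QSubst X Y y ys Z` means that `Z` is a result of substituting `Y` for the free
occurrences of the variable `y` of varsort `ys` in `X` (along a capture-free
representative). -/
inductive QSubst : QTerm var varsort index bindex opsym →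
    QTerm var varsort index bindex opsym → var → varsort →
    QTerm var varsort index bindex opsym → Prop where
  | var_eq : ∀ {Y y ys}, QSubst (.qVar ys y) Y y ys Y
  | var_ne : ∀ {Y y ys xs x}, (xs, x) ≠ (ys, y) → QSubst (.qVar xs x) Y y ys (.qVar xs x)
  | op : ∀ {Y y ys d inp binp inp' binp'},
      (∀ i, inp i = none ↔ inp' i = none) →
      (∀ i X X', inp i = some X → inp' i = some X' → QSubst X Y y ys X') →
      (∀ j, binp j = none ↔ binp' j = none) →
      (∀ j A A', binp j = some A → binp' j = some A' → QSubstAbs A Y y ys A') →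
      QSubst (.qOp d inp binp) Y y ys (.qOp d inp' binp')
/-- The graph of capture-avoiding substitution on quasiabstractions. -/
inductive QSubstAbs : QAbs var varsort index bindex opsym →
    QTerm var varsort index bindex opsym → var → varsort →
    QAbs var varsort index bindex opsym → Prop where
  | abs : ∀ {Y y ys xs x X X'}, (xs, x) ≠ (ys, y) → QFresh xs x Y →
      QSubst X Y y ys X' → QSubstAbs (.qAbs xs x X) Y y ys (.qAbs xs x X')
end

/-- The graph of capture-avoiding substitution on terms. -/
def SubstRel (X Y : Term var varsort index bindex opsym) (y : var) (ys : varsort)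
    (Z : Term var varsort index bindex opsym) : Prop :=
  ∃ qX qZ, tmk qX = X ∧ tmk qZ = Z ∧ QSubst qX (trep Y) y ys qZ

/-- Capture-avoiding substitution on terms: `subst X Y y ys` is `X[Y/y]_ys`. -/
noncomputable def subst (X Y : Term var varsort index bindex opsym)
    (y : var) (ys : varsort) : Term var varsort index bindex opsym :=
  if h : ∃ Z, SubstRel X Y y ys Z then h.choose else X

/-- The graph of capture-avoiding substitution on abstractions. -/
def SubstAbsRel (A : Abstr var varsort index bindex opsym)
    (Y : Term var varsort index bindex opsym) (y : var) (ys : varsort)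
    (B : Abstr var varsort index bindex opsym) : Prop :=
  ∃ qA qB, amk qA = A ∧ amk qB = B ∧ QSubstAbs qA (trep Y) y ys qB

/-- Capture-avoiding substitution on abstractions: `substAbs A Y y ys` is `A[Y/y]_ys`. -/
noncomputable def substAbs (A : Abstr var varsort index bindex opsym)
    (Y : Term var varsort index bindex opsym) (y : var) (ys : varsort) :
    Abstr var varsort index bindex opsym :=
  if h : ∃ B, SubstAbsRel A Y y ys B then h.choose else A

/-! ### Parallel substitution -/

mutual
/-- The graph of capture-avoiding parallel substitution on quasiterms, along an
assignment `ρ : varsort → var → Option qterm`. -/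
inductive QPSubst : QTerm var varsort index bindex opsym →
    (varsort → var → Option (QTerm var varsort index bindex opsym)) →
    QTerm var varsort index bindex opsym → Prop where
  | var_some : ∀ {ρ xs x Y}, ρ xs x = some Y → QPSubst (.qVar xs x) ρ Y
  | var_none : ∀ {ρ xs x}, ρ xs x = none → QPSubst (.qVar xs x) ρ (.qVar xs x)
  | op : ∀ {ρ d inp binp inp' binp'},
      (∀ i, inp i = none ↔ inp' i = none) →
      (∀ i X X', inp i = some X → inp' i = some X' → QPSubst X ρ X') →
      (∀ j, binp j = none ↔ binp' j = none) →
      (∀ j A A', binp j = some A → binp' j = some A' → QPSubstAbs A ρ A') →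
      QPSubst (.qOp d inp binp) ρ (.qOp d inp' binp')
/-- The graph of capture-avoiding parallel substitution on quasiabstractions. -/
inductive QPSubstAbs : QAbs var varsort index bindex opsym →
    (varsort → var → Option (QTerm var varsort index bindex opsym)) →
    QAbs var varsort index bindex opsym → Prop where
  | abs : ∀ {ρ xs x X X'}, ρ xs x = none →
      (∀ ys y Y, ρ ys y = some Y → QFresh xs x Y) →
      QPSubst X ρ X' → QPSubstAbs (.qAbs xs x X) ρ (.qAbs xs x X')
end

/-- Turning a term-valued assignment into a quasiterm-valued one, by picking
representatives. -/
noncomputable def qassign (ρ : varsort → var → Option (Term var varsort index bindex opsym)) :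
    varsort → var → Option (QTerm var varsort index bindex opsym) :=
  fun xs x => (ρ xs x).map trep

/-- The graph of parallel substitution on terms. -/
def PSubstRel (X : Term var varsort index bindex opsym)
    (ρ : varsort → var → Option (Term var varsort index bindex opsym))
    (Z : Term var varsort index bindex opsym) : Prop :=
  ∃ qX qZ, tmk qX = X ∧ tmk qZ = Z ∧ QPSubst qX (qassign ρ) qZ

/-- Capture-avoiding parallel substitution on terms: `psubst X ρ` is `X[ρ]`. -/
noncomputable def psubst (X : Term var varsort index bindex opsym)
    (ρ : varsort → var → Option (Term var varsort index bindex opsym)) :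
    Term var varsort index bindex opsym :=
  if h : ∃ Z, PSubstRel X ρ Z then h.choose else X

/-- The graph of parallel substitution on abstractions. -/
def PSubstAbsRel (A : Abstr var varsort index bindex opsym)
    (ρ : varsort → var → Option (Term var varsort index bindex opsym))
    (B : Abstr var varsort index bindex opsym) : Prop :=
  ∃ qA qB, amk qA = A ∧ amk qB = B ∧ QPSubstAbs qA (qassign ρ) qB

/-- Capture-avoiding parallel substitution on abstractions. -/
noncomputable def psubstAbs (A : Abstr var varsort index bindex opsym)
    (ρ : varsort → var → Option (Term var varsort index bindex opsym)) :
    Abstr var varsort index bindex opsym :=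
  if h : ∃ B, PSubstAbsRel A ρ B then h.choose else A


/-!
Symmetry, and invariance of `Alpha` under swapping, follow by induction on derivations.
Reflexivity and transitivity need, at each abstraction, a variable fresh for a few good
quasiterms; one exists because a good quasiterm has fewer than `|var|` non-fresh variables, by
regularity of `|var|`. Since `AlphaAbs` compares swapped bodies, both are proved by induction on
quasiterms up to swapping. For transitivity the witnesses of the two hypotheses must be unified:
any fresh variable is a witness, because swapping two variables that are fresh in a good quasiterm
yields an alpha-equivalent quasiterm.
-/

open Cardinal

local notation "QT" => QTerm var varsort index bindex opsym
local notation "QA" => QAbs var varsort index bindex opsym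

theorem swapVar_swapVar (z1 z2 x : var) : swapVar var z1 z2 (swapVar var z1 z2 x) = x := by
  unfold swapVar; split_ifs <;> simp_all

theorem swapVarS_swapVarS (zs xs : varsort) (z1 z2 x : var) :
    swapVarS var varsort zs xs z1 z2 (swapVarS var varsort zs xs z1 z2 x) = x := by
  unfold swapVarS; split_ifs <;> simp [swapVar_swapVar]

theorem swapVarS_injective (zs xs : varsort) (z1 z2 : var) :
    Function.Injective (swapVarS var varsort zs xs z1 z2) :=
  Function.LeftInverse.injective (swapVarS_swapVarS zs xs z1 z2)

theorem swapVar_swapVar_comm (z1 z2 u v x : var) :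
    swapVar var z1 z2 (swapVar var u v x) =
      swapVar var (swapVar var z1 z2 u) (swapVar var z1 z2 v) (swapVar var z1 z2 x) := by
  unfold swapVar; split_ifs <;> simp_all

theorem swapVarS_swapVarS_comm (zs us xs : varsort) (z1 z2 u v x : var) :
    swapVarS var varsort zs xs z1 z2 (swapVarS var varsort us xs u v x) =
      swapVarS var varsort us xs (swapVarS var varsort zs us z1 z2 u)
        (swapVarS var varsort zs us z1 z2 v) (swapVarS var varsort zs xs z1 z2 x) := by
  unfold swapVarS; split_ifs <;> first | exact swapVar_swapVar_comm z1 z2 u v x | rfl | simp_all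

theorem swapVarS_right (zs : varsort) (z1 z2 : var) : swapVarS var varsort zs zs z1 z2 z2 = z1 := by
  simp [swapVarS, swapVar]

theorem swapVarS_of_ne {zs xs : varsort} {z1 z2 x : var} (h1 : xs = zs → x ≠ z1)
    (h2 : xs = zs → x ≠ z2) : swapVarS var varsort zs xs z1 z2 x = x := by
  unfold swapVarS swapVar; split_ifs <;> simp_all

@[simp] theorem qSwap_qVar (z1 z2 : var) (zs xs : varsort) (x : var) :
    qSwap z1 z2 zs (.qVar xs x : QT) = .qVar xs (swapVarS var varsort zs xs z1 z2 x) := rfl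

@[simp] theorem qSwap_qOp (z1 z2 : var) (zs : varsort) (d : opsym) (inp : index → Option QT)
    (binp : bindex → Option QA) :
    qSwap z1 z2 zs (.qOp d inp binp : QT) =
      .qOp d (fun i => (inp i).map (qSwap z1 z2 zs))
        (fun j => (binp j).map (qSwapAbs z1 z2 zs)) := by
  change QTerm.qOp d _ _ = _
  congr 1 <;> funext a
  · cases inp a <;> rfl
  · rcases binp a with _ | ⟨xs, x, X⟩ <;> rfl

@[simp] theorem qSwapAbs_qAbs (z1 z2 : var) (zs xs : varsort) (x : var) (X : QT) :
    qSwapAbs z1 z2 zs (.qAbs xs x X : QA) =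
      .qAbs xs (swapVarS var varsort zs xs z1 z2 x) (qSwap z1 z2 zs X) := rfl

theorem qterm_induction {P : QT → Prop} {Q : QA → Prop} (hvar : ∀ xs x, P (.qVar xs x))
    (hop : ∀ d inp binp, (∀ i X, inp i = some X → P X) →
      (∀ j A, binp j = some A → Q A) → P (.qOp d inp binp))
    (habs : ∀ xs x X, P X → Q (.qAbs xs x X)) :
    (∀ X, P X) ∧ (∀ A, Q A) :=
  ⟨fun X => QTerm.rec (motive_3 := fun o => ∀ X, o = some X → P X)
      (motive_4 := fun o => ∀ A, o = some A → Q A) hvar hop habs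
      (fun _ h => nomatch h) (fun _ hX _ h => Option.some.inj h ▸ hX)
      (fun _ h => nomatch h) (fun _ hA _ h => Option.some.inj h ▸ hA) X,
    fun A => QAbs.rec (motive_3 := fun o => ∀ X, o = some X → P X)
      (motive_4 := fun o => ∀ A, o = some A → Q A) hvar hop habs
      (fun _ h => nomatch h) (fun _ hX _ h => Option.some.inj h ▸ hX)
      (fun _ h => nomatch h) (fun _ hA _ h => Option.some.inj h ▸ hA) A⟩

theorem qSwap_involutive (z1 z2 : var) (zs : varsort) :
    (∀ X : QT, qSwap z1 z2 zs (qSwap z1 z2 zs X) = X) ∧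
      (∀ A : QA, qSwapAbs z1 z2 zs (qSwapAbs z1 z2 zs A) = A) := by
  apply qterm_induction
  · intro xs x
    rw [qSwap_qVar, qSwap_qVar, swapVarS_swapVarS]
  · intro d inp binp ih1 ih2
    simp only [qSwap_qOp, Option.map_map]
    congr 1 <;> funext a
    · rcases h : inp a with _ | X
      · rfl
      · simp [ih1 a X h]
    · rcases h : binp a with _ | A
      · rfl
      · simp [ih2 a A h]
  · intro xs x X ih
    rw [qSwapAbs_qAbs, qSwapAbs_qAbs, swapVarS_swapVarS, ih]

theorem qSwap_qSwap_comm (z1 z2 u v : var) (zs us : varsort) :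
    (∀ X : QT, qSwap z1 z2 zs (qSwap u v us X) =
      qSwap (swapVarS var varsort zs us z1 z2 u) (swapVarS var varsort zs us z1 z2 v) us
        (qSwap z1 z2 zs X)) ∧
    (∀ A : QA, qSwapAbs z1 z2 zs (qSwapAbs u v us A) =
      qSwapAbs (swapVarS var varsort zs us z1 z2 u) (swapVarS var varsort zs us z1 z2 v) us
        (qSwapAbs z1 z2 zs A)) := by
  apply qterm_induction
  · intro xs x
    rw [qSwap_qVar, qSwap_qVar, qSwap_qVar, qSwap_qVar, swapVarS_swapVarS_comm]
  · intro d inp binp ih1 ih2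
    simp only [qSwap_qOp, Option.map_map]
    congr 1 <;> funext a
    · rcases h : inp a with _ | X
      · rfl
      · simp [ih1 a X h]
    · rcases h : binp a with _ | A
      · rfl
      · simp [ih2 a A h]
  · intro xs x X ih
    rw [qSwapAbs_qAbs, qSwapAbs_qAbs, qSwapAbs_qAbs, qSwapAbs_qAbs, ih, swapVarS_swapVarS_comm]

theorem qSwap_shift {u y x : var} {xs : varsort} (hux : u ≠ x) (hyx : y ≠ x) (X : QT) :
    qSwap u y xs (qSwap y x xs X) = qSwap u x xs (qSwap u y xs X) := by
  rw [(qSwap_qSwap_comm u y y x xs xs).1, swapVarS_right,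
    swapVarS_of_ne (fun _ => hux.symm) (fun _ => hyx.symm)]

noncomputable def qSwaps (π : List (var × var × varsort)) (X : QT) : QT :=
  π.foldr (fun p => qSwap p.1 p.2.1 p.2.2) X

noncomputable def qSwapsAbs (π : List (var × var × varsort)) (A : QA) : QA :=
  π.foldr (fun p => qSwapAbs p.1 p.2.1 p.2.2) A

theorem qSwaps_qVar (π : List (var × var × varsort)) (xs : varsort) (x : var) :
    ∃ y, qSwaps π (.qVar xs x : QT) = .qVar xs y := by
  induction π with
  | nil => exact ⟨x, rfl⟩
  | cons p π ih =>
    obtain ⟨y, hy⟩ := ih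
    exact ⟨_, congrArg (qSwap p.1 p.2.1 p.2.2) hy⟩

theorem qSwaps_qOp (π : List (var × var × varsort)) (d : opsym) (inp : index → Option QT)
    (binp : bindex → Option QA) :
    qSwaps π (.qOp d inp binp : QT) =
      .qOp d (fun i => (inp i).map (qSwaps π)) (fun j => (binp j).map (qSwapsAbs π)) := by
  induction π with
  | nil =>
    change QTerm.qOp d inp binp = QTerm.qOp d (fun i => (inp i).map id) (fun j => (binp j).map id)
    simp only [Option.map_id_fun, id_eq]
  | cons p π ih =>
    change qSwap p.1 p.2.1 p.2.2 (qSwaps π _) = _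
    rw [ih, qSwap_qOp]
    simp only [Option.map_map]
    rfl

theorem qSwapsAbs_qAbs (π : List (var × var × varsort)) (xs : varsort) (x : var) (X : QT) :
    ∃ y, qSwapsAbs π (.qAbs xs x X : QA) = .qAbs xs y (qSwaps π X) := by
  induction π with
  | nil => exact ⟨x, rfl⟩
  | cons p π ih =>
    obtain ⟨y, hy⟩ := ih
    exact ⟨_, congrArg (qSwapAbs p.1 p.2.1 p.2.2) hy⟩

/-- Proved by structural induction on the claim for all iterated swaps `qSwaps π X`, which
commute with the constructors. -/
theorem qterm_swap_induction {P : QT → Prop} {Q : QA → Prop} (hvar : ∀ xs x, P (.qVar xs x))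
    (hop : ∀ d inp binp, (∀ i X, inp i = some X → P X) →
      (∀ j A, binp j = some A → Q A) → P (.qOp d inp binp))
    (habs : ∀ xs x X, (∀ z1 z2 zs, P (qSwap z1 z2 zs X)) → Q (.qAbs xs x X)) :
    (∀ X, P X) ∧ (∀ A, Q A) := by
  suffices h : (∀ X : QT, ∀ π, P (qSwaps π X)) ∧ (∀ A : QA, ∀ π, Q (qSwapsAbs π A))
    from ⟨fun X => h.1 X [], fun A => h.2 A []⟩
  apply qterm_induction
  · intro xs x π
    obtain ⟨y, hy⟩ := qSwaps_qVar π xs x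
    exact hy ▸ hvar xs y
  · intro d inp binp ih1 ih2 π
    rw [qSwaps_qOp]
    refine hop _ _ _ (fun i X hX => ?_) (fun j A hA => ?_)
    · obtain ⟨X0, h0, rfl⟩ := Option.map_eq_some_iff.1 hX
      exact ih1 i X0 h0 π
    · obtain ⟨A0, h0, rfl⟩ := Option.map_eq_some_iff.1 hA
      exact ih2 j A0 h0 π
  · intro xs x X ih π
    obtain ⟨y, hy⟩ := qSwapsAbs_qAbs π xs x X
    exact hy ▸ habs xs y _ fun z1 z2 zs => ih ((z1, z2, zs) :: π)

mutual
theorem qFresh_qSwap {z1 z2 : var} {zs ys : varsort} {y : var} :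
    ∀ {X : QT}, QFresh ys y X →
      QFresh ys (swapVarS var varsort zs ys z1 z2 y) (qSwap z1 z2 zs X)
  | _, .qVar hne => .qVar fun h => hne <| by
      obtain ⟨rfl, hy⟩ := Prod.mk.inj h
      rw [swapVarS_injective zs ys z1 z2 hy]
  | _, .qOp hinp hbinp => by
      rw [qSwap_qOp]
      refine .qOp (fun i X hX => ?_) (fun j A hA => ?_)
      · obtain ⟨X0, h0, rfl⟩ := Option.map_eq_some_iff.1 hX
        exact qFresh_qSwap (hinp i X0 h0)
      · obtain ⟨A0, h0, rfl⟩ := Option.map_eq_some_iff.1 hA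
        exact qFreshAbs_qSwapAbs (hbinp j A0 h0)

theorem qFreshAbs_qSwapAbs {z1 z2 : var} {zs ys : varsort} {y : var} :
    ∀ {A : QA}, QFreshAbs ys y A →
      QFreshAbs ys (swapVarS var varsort zs ys z1 z2 y) (qSwapAbs z1 z2 zs A)
  | _, .qAbs_bound => .qAbs_bound
  | _, .qAbs_body h => .qAbs_body (qFresh_qSwap h)
end

theorem qFresh_qSwap_iff {z1 z2 : var} {zs ys : varsort} {y : var} {X : QT} :
    QFresh ys y (qSwap z1 z2 zs X) ↔ QFresh ys (swapVarS var varsort zs ys z1 z2 y) X := by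
  constructor <;> intro h
  · simpa only [(qSwap_involutive z1 z2 zs).1] using
      qFresh_qSwap (z1 := z1) (z2 := z2) (zs := zs) h
  · simpa only [swapVarS_swapVarS] using qFresh_qSwap (z1 := z1) (z2 := z2) (zs := zs) h

mutual
theorem qGood_qSwap {z1 z2 : var} {zs : varsort} :
    ∀ {X : QT}, QGood X → QGood (qSwap z1 z2 zs X)
  | _, .qVar => .qVar
  | _, .qOp (inp := inp) (binp := binp) hinp hbinp hsmall hbsmall => by
      rw [qSwap_qOp]
      refine .qOp (fun i X hX => ?_) (fun j A hA => ?_) ?_ ?_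
      · obtain ⟨X0, h0, rfl⟩ := Option.map_eq_some_iff.1 hX
        exact qGood_qSwap (hinp i X0 h0)
      · obtain ⟨A0, h0, rfl⟩ := Option.map_eq_some_iff.1 hA
        exact qGoodAbs_qSwapAbs (hbinp j A0 h0)
      · simpa [smallDom, idom] using hsmall
      · simpa [smallDom, idom] using hbsmall

theorem qGoodAbs_qSwapAbs {z1 z2 : var} {zs : varsort} :
    ∀ {A : QA}, QGoodAbs A → QGoodAbs (qSwapAbs z1 z2 zs A)
  | _, .qAbs h => .qAbs (qGood_qSwap h)
end

theorem mk_setOf_input_lt {α β : Type u} (hreg : (#var).IsRegular) {inp : Input α β}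
    (hinp : smallDom var inp) {f : β → Set var}
    (hf : ∀ a b, inp a = some b → #(f b) < #var) :
    #{v | ∃ a b, inp a = some b ∧ v ∈ f b} < #var := by
  have hsub :
      {v | ∃ a b, inp a = some b ∧ v ∈ f b} ⊆ ⋃ a : idom inp, (inp a).elim ∅ f := by
    rintro v ⟨a, b, hab, hv⟩
    exact Set.mem_iUnion.2 ⟨⟨a, by simp [idom, hab]⟩, by simpa [hab] using hv⟩
  refine (mk_le_mk_of_subset hsub).trans_lt
    ((card_iUnion_lt_iff_forall_of_isRegular hreg hinp).2 ?_)
  rintro ⟨a, ha⟩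
  rcases hab : inp a with _ | b
  · simp [idom, hab] at ha
  · simpa [hab] using hf a b hab

def nonFresh (xs : varsort) (X : QT) : Set var := {y | ¬ QFresh xs y X}

def nonFreshAbs (xs : varsort) (A : QA) : Set var := {y | ¬ QFreshAbs xs y A}

mutual
theorem mk_nonFresh_lt (hreg : (#var).IsRegular) (xs : varsort) :
    ∀ {X : QT}, QGood X → #(nonFresh xs X) < #var
  | .qVar ys y, .qVar => by
      have hsub : nonFresh xs (.qVar ys y : QT) ⊆ {y} := fun v hv => by
        by_contra hne
        exact hv (.qVar fun h => hne (Prod.mk.inj h).2)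
      exact (mk_le_mk_of_subset hsub).trans_lt
        (by simpa using one_lt_aleph0.trans_le hreg.aleph0_le)
  | .qOp d inp binp, .qOp hinp hbinp hsmall hbsmall => by
      have hsub : nonFresh xs (.qOp d inp binp : QT) ⊆
          {v | ∃ i X, inp i = some X ∧ v ∈ nonFresh xs X} ∪
            {v | ∃ j A, binp j = some A ∧ v ∈ nonFreshAbs xs A} := fun v hv => by
        by_contra hout
        simp only [Set.mem_union, Set.mem_ofPred_eq, nonFresh, nonFreshAbs, not_or, not_exists,
          not_and, not_not] at hout
        exact hv (.qOp hout.1 hout.2)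
      refine (mk_le_mk_of_subset hsub).trans_lt
        ((mk_union_le _ _).trans_lt (add_lt_of_lt hreg.aleph0_le ?_ ?_))
      · exact mk_setOf_input_lt hreg hsmall fun i X hX => mk_nonFresh_lt hreg xs (hinp i X hX)
      · exact mk_setOf_input_lt hreg hbsmall fun j A hA => mk_nonFreshAbs_lt hreg xs (hbinp j A hA)

theorem mk_nonFreshAbs_lt (hreg : (#var).IsRegular) (xs : varsort) :
    ∀ {A : QA}, QGoodAbs A → #(nonFreshAbs xs A) < #var
  | .qAbs ys y X, .qAbs h => by
      have hsub : nonFreshAbs xs (.qAbs ys y X : QA) ⊆ nonFresh xs X := fun v hv => by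
        by_contra hne
        exact hv (.qAbs_body (not_not.1 hne))
      exact (mk_le_mk_of_subset hsub).trans_lt (mk_nonFresh_lt hreg xs h)
end

theorem exists_qFresh (hreg : (#var).IsRegular) (xs : varsort) (L : List var) (Xs : List QT)
    (hXs : ∀ X ∈ Xs, QGood X) : ∃ y ∉ L, ∀ X ∈ Xs, QFresh xs y X := by
  have hsmall : #↥({y | y ∈ L} ∪ ⋃ X ∈ {X | X ∈ Xs}, nonFresh xs X) < #var := by
    refine (mk_union_le _ _).trans_lt (add_lt_of_lt hreg.aleph0_le ?_ ?_)
    · exact L.finite_toSet.lt_aleph0.trans_le hreg.aleph0_le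
    · refine (card_biUnion_lt_iff_forall_of_isRegular hreg ?_).2
        fun X hX => mk_nonFresh_lt hreg xs (hXs X hX)
      exact Xs.finite_toSet.lt_aleph0.trans_le hreg.aleph0_le
  obtain ⟨y, hy⟩ := (Set.ne_univ_iff_exists_notMem _).1
    fun h => (h ▸ mk_univ (α := var) ▸ hsmall).false
  simp only [Set.mem_union, Set.mem_ofPred_eq, Set.mem_iUnion, nonFresh, not_or, not_exists,
    not_not] at hy
  exact ⟨y, hy.1, hy.2⟩

mutual
theorem alpha_qSwap {z1 z2 : var} {zs : varsort} :
    ∀ {X Y : QT}, Alpha X Y → Alpha (qSwap z1 z2 zs X) (qSwap z1 z2 zs Y)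
  | _, _, .qVar => .qVar
  | _, _, .qOp hdom hinp hbdom hbinp => by
      rw [qSwap_qOp, qSwap_qOp]
      refine .qOp (fun i => by simp [hdom i]) (fun i X X' hX hX' => ?_)
        (fun j => by simp [hbdom j]) (fun j A A' hA hA' => ?_)
      · obtain ⟨X0, h0, rfl⟩ := Option.map_eq_some_iff.1 hX
        obtain ⟨X0', h0', rfl⟩ := Option.map_eq_some_iff.1 hX'
        exact alpha_qSwap (hinp i X0 X0' h0 h0')
      · obtain ⟨A0, h0, rfl⟩ := Option.map_eq_some_iff.1 hA
        obtain ⟨A0', h0', rfl⟩ := Option.map_eq_some_iff.1 hA'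
        exact alphaAbs_qSwapAbs (hbinp j A0 A0' h0 h0')

theorem alphaAbs_qSwapAbs {z1 z2 : var} {zs : varsort} :
    ∀ {A B : QA}, AlphaAbs A B → AlphaAbs (qSwapAbs z1 z2 zs A) (qSwapAbs z1 z2 zs B)
  | .qAbs xs x X, .qAbs _ x' X', .qAbs (y := y) hy hyX hyX' h => by
      rw [qSwapAbs_qAbs, qSwapAbs_qAbs]
      refine .qAbs (y := swapVarS var varsort zs xs z1 z2 y) ?_ (qFresh_qSwap hyX)
        (qFresh_qSwap hyX') ?_
      · simpa only [Set.mem_insert_iff, Set.mem_singleton_iff,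
          (swapVarS_injective zs xs z1 z2).eq_iff] using hy
      · rw [← (qSwap_qSwap_comm z1 z2 y x zs xs).1, ← (qSwap_qSwap_comm z1 z2 y x' zs xs).1]
        exact alpha_qSwap h
end

mutual
theorem Alpha.symm : ∀ {X Y : QT}, Alpha X Y → Alpha Y X
  | _, _, .qVar => .qVar
  | _, _, .qOp hdom hinp hbdom hbinp =>
    .qOp (fun i => (hdom i).symm) (fun i X X' hX hX' => (hinp i X' X hX' hX).symm)
      (fun j => (hbdom j).symm) (fun j A A' hA hA' => (hbinp j A' A hA' hA).symm)

theorem AlphaAbs.symm : ∀ {A B : QA}, AlphaAbs A B → AlphaAbs B A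
  | _, _, .qAbs hy hyX hyX' h => .qAbs (by simpa [or_comm] using hy) hyX' hyX h.symm
end

theorem alpha_refl (hreg : (#var).IsRegular) :
    (∀ X : QT, QGood X → Alpha X X) ∧ (∀ A : QA, QGoodAbs A → AlphaAbs A A) := by
  apply qterm_swap_induction
  · exact fun _ _ _ => .qVar
  · intro d inp binp ih1 ih2 hg
    cases hg with | qOp hinp hbinp _ _ => ?_
    refine .qOp (fun _ => Iff.rfl) (fun i X X' hX hX' => ?_) (fun _ => Iff.rfl)
      (fun j A A' hA hA' => ?_)
    · obtain rfl : X = X' := Option.some.inj (hX.symm.trans hX')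
      exact ih1 i X hX (hinp i X hX)
    · obtain rfl : A = A' := Option.some.inj (hA.symm.trans hA')
      exact ih2 j A hA (hbinp j A hA)
  · rintro xs x X ih ⟨hX⟩
    obtain ⟨y, hyx, hy⟩ := exists_qFresh hreg xs [x] [X] (by simpa using hX)
    have hyX : QFresh xs y X := hy X (by simp)
    exact .qAbs (by simpa using hyx) hyX hyX (ih y x xs (qGood_qSwap hX))

theorem qFresh_qSwap_of_qFreshAbs {zs xs : varsort} {z w x : var} {X : QT}
    (hz : QFreshAbs zs z (.qAbs xs x X)) (hw : QFresh xs w X) (hzw : z ≠ w) :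
    QFresh zs z (qSwap w x xs X) := by
  rw [qFresh_qSwap_iff]
  by_cases hbound : zs = xs ∧ z = x
  · obtain ⟨rfl, rfl⟩ := hbound
    rwa [swapVarS_right]
  · rw [swapVarS_of_ne (fun _ => hzw) fun h => (hbound ⟨h, ·⟩)]
    cases hz with
    | qAbs_bound => exact absurd ⟨rfl, rfl⟩ hbound
    | qAbs_body h => exact h

theorem alpha_qSwap_of_qFresh (hreg : (#var).IsRegular) :
    (∀ X : QT, QGood X → ∀ z1 z2 zs, QFresh zs z1 X → QFresh zs z2 X →
      Alpha (qSwap z1 z2 zs X) X) ∧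
    (∀ A : QA, QGoodAbs A → ∀ z1 z2 zs, QFreshAbs zs z1 A → QFreshAbs zs z2 A →
      AlphaAbs (qSwapAbs z1 z2 zs A) A) := by
  apply qterm_swap_induction
  · intro xs x _ z1 z2 zs h1 h2
    cases h1 with | qVar hne1 => ?_
    cases h2 with | qVar hne2 => ?_
    rw [qSwap_qVar, swapVarS_of_ne (fun h => by rintro rfl; exact hne1 (h ▸ rfl))
      (fun h => by rintro rfl; exact hne2 (h ▸ rfl))]
    exact .qVar
  · intro d inp binp ih1 ih2 hg z1 z2 zs h1 h2
    cases hg with | qOp hinp hbinp _ _ => ?_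
    cases h1 with | qOp h1inp h1binp => ?_
    cases h2 with | qOp h2inp h2binp => ?_
    rw [qSwap_qOp]
    refine .qOp (fun i => by simp) (fun i X X' hX hX' => ?_) (fun j => by simp)
      (fun j A A' hA hA' => ?_)
    · obtain ⟨X0, h0, rfl⟩ := Option.map_eq_some_iff.1 hX
      obtain rfl : X0 = X' := Option.some.inj (h0.symm.trans hX')
      exact ih1 i X0 h0 (hinp i X0 h0) z1 z2 zs (h1inp i X0 h0) (h2inp i X0 h0)
    · obtain ⟨A0, h0, rfl⟩ := Option.map_eq_some_iff.1 hA
      obtain rfl : A0 = A' := Option.some.inj (h0.symm.trans hA')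
      exact ih2 j A0 h0 (hbinp j A0 h0) z1 z2 zs (h1binp j A0 h0) (h2binp j A0 h0)
  · intro xs x X ih hg z1 z2 zs h1 h2
    cases hg with | qAbs hX => ?_
    rw [qSwapAbs_qAbs]
    set x' := swapVarS var varsort zs xs z1 z2 x
    obtain ⟨w, hw, hwX⟩ := exists_qFresh hreg xs [x, x', z1, z2] [X] (by simpa using hX)
    simp only [List.mem_cons, List.not_mem_nil, or_false, not_or, forall_eq] at hw hwX
    obtain ⟨hwx, hwx', hwz1, hwz2⟩ := hw
    -- renaming `x` to `w` in the body and swapping `z1, z2` commute, since `w ≠ z1, z2`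
    have hbody := ih w x xs (qGood_qSwap hX) z1 z2 zs
      (qFresh_qSwap_of_qFreshAbs h1 hwX (Ne.symm hwz1))
      (qFresh_qSwap_of_qFreshAbs h2 hwX (Ne.symm hwz2))
    rw [(qSwap_qSwap_comm z1 z2 w x zs xs).1,
      swapVarS_of_ne (fun _ => hwz1) (fun _ => hwz2)] at hbody
    refine .qAbs (y := w) (by simp [hwx, hwx']) ?_ hwX hbody
    rwa [qFresh_qSwap_iff, swapVarS_of_ne (fun _ => hwz1) (fun _ => hwz2)]

/-- The fresh witness `y` of an `AlphaAbs` may be replaced by any other fresh `u`, as long as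
alpha-equivalence is transitive to the right of `L`. -/
theorem alpha_qSwap_of_witness (hreg : (#var).IsRegular) {L X X' : QT} {xs : varsort}
    {x x' y u : var}
    (htrans : ∀ Y Z, QGood Y → QGood Z → Alpha L Y → Alpha Y Z → Alpha L Z)
    (hX : QGood X) (hX' : QGood X') (hy : y ∉ ({x, x'} : Set var))
    (hyX : QFresh xs y X) (hyX' : QFresh xs y X') (hu : u ∉ ({x, x'} : Set var))
    (huX : QFresh xs u X) (huX' : QFresh xs u X')
    (hXX' : Alpha (qSwap y x xs X) (qSwap y x' xs X')) (hL : Alpha L (qSwap u x xs X)) :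
    Alpha L (qSwap u x' xs X') := by
  simp only [Set.mem_insert_iff, Set.mem_singleton_iff, not_or] at hy hu
  have h1 : Alpha (qSwap u x xs X) (qSwap u x xs (qSwap u y xs X)) :=
    alpha_qSwap ((alpha_qSwap_of_qFresh hreg).1 X hX u y xs huX hyX).symm
  have h2 : Alpha (qSwap u x xs (qSwap u y xs X)) (qSwap u x' xs (qSwap u y xs X')) := by
    simpa only [qSwap_shift hu.1 hy.1, qSwap_shift hu.2 hy.2] using
      alpha_qSwap (z1 := u) (z2 := y) (zs := xs) hXX'
  have h3 : Alpha (qSwap u x' xs (qSwap u y xs X')) (qSwap u x' xs X') :=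
    alpha_qSwap ((alpha_qSwap_of_qFresh hreg).1 X' hX' u y xs huX' hyX')
  have hgood {Z : QT} (hZ : QGood Z) (z : var) : QGood (qSwap u z xs (qSwap u y xs Z)) :=
    qGood_qSwap (qGood_qSwap hZ)
  have hL1 := htrans _ _ (qGood_qSwap hX) (hgood hX x) hL h1
  have hL2 := htrans _ _ (hgood hX x) (hgood hX' x') hL1 h2
  exact htrans _ _ (hgood hX' x') (qGood_qSwap hX') hL2 h3

theorem alpha_trans (hreg : (#var).IsRegular) :
    (∀ X : QT, QGood X → ∀ Y Z, QGood Y → QGood Z →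
      Alpha X Y → Alpha Y Z → Alpha X Z) ∧
    (∀ A : QA, QGoodAbs A → ∀ B C, QGoodAbs B → QGoodAbs C →
      AlphaAbs A B → AlphaAbs B C → AlphaAbs A C) := by
  apply qterm_swap_induction
  · rintro xs x - Y Z - - ⟨⟩ ⟨⟩
    exact .qVar
  · intro d inp binp ih1 ih2 hg Y Z hY hZ h1 h2
    cases hg with | qOp hinp hbinp _ _ => ?_
    cases h1 with | @qOp _ _ _ inpY binpY hdom1 hinp1 hbdom1 hbinp1 => ?_
    cases h2 with | @qOp _ _ _ inpZ binpZ hdom2 hinp2 hbdom2 hbinp2 => ?_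
    cases hY with | qOp hinpY hbinpY _ _ => ?_
    cases hZ with | qOp hinpZ hbinpZ _ _ => ?_
    refine .qOp (fun i => (hdom1 i).trans (hdom2 i)) (fun i X1 X3 h1 h3 => ?_)
      (fun j => (hbdom1 j).trans (hbdom2 j)) (fun j A1 A3 h1 h3 => ?_)
    · obtain ⟨X2, h2⟩ := Option.ne_none_iff_exists'.1 fun h => by simp [(hdom1 i).2 h] at h1
      exact ih1 i X1 h1 (hinp i X1 h1) X2 X3 (hinpY i X2 h2) (hinpZ i X3 h3)
        (hinp1 i X1 X2 h1 h2) (hinp2 i X2 X3 h2 h3)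
    · obtain ⟨A2, h2⟩ := Option.ne_none_iff_exists'.1 fun h => by simp [(hbdom1 j).2 h] at h1
      exact ih2 j A1 h1 (hbinp j A1 h1) A2 A3 (hbinpY j A2 h2) (hbinpZ j A3 h3)
        (hbinp1 j A1 A2 h1 h2) (hbinp2 j A2 A3 h2 h3)
  · intro xs x X ih hg B C hB hC h1 h2
    cases hg with | qAbs hX => ?_
    cases h1 with | @qAbs _ _ x' _ Y y hy hyX hyY hXY => ?_
    cases hB with | qAbs hY => ?_
    cases h2 with | @qAbs _ _ x'' _ Z z hz hzY hzZ hYZ => ?_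
    cases hC with | qAbs hZ => ?_
    obtain ⟨u, hu, huF⟩ := exists_qFresh hreg xs [x, x', x'', y, z] [X, Y, Z] (by simp [*])
    simp only [List.mem_cons, List.not_mem_nil, or_false, not_or, forall_eq_or_imp,
      forall_eq] at hu huF
    obtain ⟨huX, huY, huZ⟩ := huF
    have hL := ih u x xs (qGood_qSwap hX)
    have hLY := alpha_qSwap_of_witness hreg hL hX hY hy hyX hyY (by simp [hu.1, hu.2.1]) huX huY
      hXY ((alpha_refl hreg).1 _ (qGood_qSwap hX))
    have hLZ := alpha_qSwap_of_witness hreg hL hY hZ hz hzY hzZ (by simp [hu.2.1, hu.2.2.1])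
      huY huZ hYZ hLY
    exact .qAbs (by simp [hu.1, hu.2.2.1]) huX huZ hLZ

/-- `Alpha` is an equivalence relation (reflexive, symmetric,
transitive) on good quasiterms, and `AlphaAbs` is an equivalence relation on good
quasiabstractions. -/
theorem alpha_is_equivalence (hinf : Cardinal.aleph0 ≤ Cardinal.mk var)
    (hreg : (Cardinal.mk var).IsRegular) :
    (∀ X : QTerm var varsort index bindex opsym, QGood X → Alpha X X) ∧
    (∀ X Y : QTerm var varsort index bindex opsym, QGood X → QGood Y → Alpha X Y → Alpha Y X) ∧
    (∀ X Y Z : QTerm var varsort index bindex opsym, QGood X → QGood Y → QGood Z →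
      Alpha X Y → Alpha Y Z → Alpha X Z) ∧
    (∀ A : QAbs var varsort index bindex opsym, QGoodAbs A → AlphaAbs A A) ∧
    (∀ A B : QAbs var varsort index bindex opsym, QGoodAbs A → QGoodAbs B → AlphaAbs A B → AlphaAbs B A) ∧
    (∀ A B C : QAbs var varsort index bindex opsym, QGoodAbs A → QGoodAbs B → QGoodAbs C →
      AlphaAbs A B → AlphaAbs B C → AlphaAbs A C) :=
  ⟨(alpha_refl hreg).1, fun _ _ _ _ h => h.symm,
    fun X Y Z hX hY hZ => (alpha_trans hreg).1 X hX Y Z hY hZ,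
    (alpha_refl hreg).2, fun _ _ _ _ h => h.symm,
    fun A B C hA hB hC => (alpha_trans hreg).2 A hA B C hB hC⟩

end Binding
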